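/- For an invariant control set C with nonempty interior, a point x belongs to the domain of attraction 𝒜(C) = {x : cl O⁺(x) ∩ C ≠ ∅} if and only if O⁺(x) ∩ int C ≠ ∅; consequently 𝒜(C) is open. -/

import Mathlib

open MeasureTheory Set Topology

/-- A control-affine system `ẋ = f₀(x) + ∑ vᵢ(t) fᵢ(x)` on `ℝ^d` with Lipschitz
continuous vector fields and compact control range `V ⊆ ℝ^m`.  The (unique, global)
solutions are bundled as the data `φ` together with their defining properties. -/
structure CAS (d m : ℕ) where
  /-- the drift vector field -/
  f0 : (Fin d → ℝ) → (Fin d → ℝ)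
  /-- the control vector fields -/
  f : Fin m → (Fin d → ℝ) → (Fin d → ℝ)
  /-- the control range -/
  V : Set (Fin m → ℝ)
  lip0 : ∃ K, LipschitzWith K f0
  lip : ∀ i, ∃ K, LipschitzWith K (f i)
  V_compact : IsCompact V
  /-- the solution map: `φ x v t` is the solution at time `t` starting at `x` with control `v` -/
  φ : (Fin d → ℝ) → (ℝ → (Fin m → ℝ)) → ℝ → (Fin d → ℝ)
  φ_init : ∀ x v, φ x v 0 = x
  φ_cont : ∀ x v, Continuous (φ x v)
  /-- solutions are (Carathéodory) solutions of the ODE -/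
  φ_sol : ∀ (x : Fin d → ℝ) (v : ℝ → (Fin m → ℝ)), Measurable v → (∀ t, v t ∈ V) →
    ∀ t, 0 ≤ t →
      φ x v t = x + ∫ s in (0:ℝ)..t, (f0 (φ x v s) + ∑ i, v s i • f (i) (φ x v s))

namespace CAS

variable {d m : ℕ}

/-- the set of admissible controls -/
def ctrl (S : CAS d m) : Set (ℝ → (Fin m → ℝ)) :=
  {v | Measurable v ∧ ∀ t, v t ∈ S.V}

/-- a control is piecewise constant if it has only finitely many discontinuities on
every bounded interval, i.e. it is constant between the members of a sequence of
switching times tending to infinity -/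
def PiecewiseConst (v : ℝ → (Fin m → ℝ)) : Prop :=
  ∃ τ : ℕ → ℝ, τ 0 = 0 ∧ StrictMono τ ∧ Filter.Tendsto τ Filter.atTop Filter.atTop ∧
    ∀ n, ∀ t ∈ Ico (τ n) (τ (n + 1)), v t = v (τ n)

/-- the reachable set from `x` -/
def reach (S : CAS d m) (x : Fin d → ℝ) : Set (Fin d → ℝ) :=
  {y | ∃ v ∈ S.ctrl, ∃ t ≥ (0:ℝ), S.φ x v t = y}

/-- the set reachable from `x` with piecewise constant controls -/
def reachPC (S : CAS d m) (x : Fin d → ℝ) : Set (Fin d → ℝ) :=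
  {y | ∃ v ∈ S.ctrl, PiecewiseConst v ∧ ∃ t ≥ (0:ℝ), S.φ x v t = y}

/-- the reachable set from `x` up to time `T` -/
def reachLe (S : CAS d m) (T : ℝ) (x : Fin d → ℝ) : Set (Fin d → ℝ) :=
  {y | ∃ v ∈ S.ctrl, ∃ t ∈ Icc (0:ℝ) T, S.φ x v t = y}

/-- the controllable set to `x` up to time `T` -/
def contrLe (S : CAS d m) (T : ℝ) (x : Fin d → ℝ) : Set (Fin d → ℝ) :=
  {y | ∃ v ∈ S.ctrl, ∃ t ∈ Icc (0:ℝ) T, S.φ y v t = x}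

/-- positive invariance of a set -/
def posInv (S : CAS d m) (M : Set (Fin d → ℝ)) : Prop :=
  ∀ x ∈ M, ∀ v ∈ S.ctrl, ∀ t ≥ (0:ℝ), S.φ x v t ∈ M

/-- invariance of a set -/
def inv (S : CAS d m) (M : Set (Fin d → ℝ)) : Prop :=
  ∀ t ≥ (0:ℝ), {y | ∃ x ∈ M, ∃ v ∈ S.ctrl, S.φ x v t = y} = M

/-- the two defining properties (i) controlled invariance and (ii) approximate
reachability of a control set -/
def controlSetProps (S : CAS d m) (D : Set (Fin d → ℝ)) : Prop :=
  (∀ x ∈ D, ∃ v ∈ S.ctrl, ∀ t ≥ (0:ℝ), S.φ x v t ∈ D) ∧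
  (∀ x ∈ D, D ⊆ closure (S.reach x))

/-- a control set: a maximal nonempty set with the properties `controlSetProps` -/
def isControlSet (S : CAS d m) (D : Set (Fin d → ℝ)) : Prop :=
  D.Nonempty ∧ S.controlSetProps D ∧
  ∀ D', D ⊆ D' → S.controlSetProps D' → D' = D

/-- an invariant control set -/
def isInvControlSet (S : CAS d m) (C : Set (Fin d → ℝ)) : Prop :=
  S.isControlSet C ∧ ∀ x ∈ C, closure C = closure (S.reach x)

/-- local accessibility at a point -/
def locAccAt (S : CAS d m) (x : Fin d → ℝ) : Prop :=
  ∀ T > (0:ℝ), ∀ N ∈ 𝓝 x,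
    (interior (S.reachLe T x) ∩ N).Nonempty ∧ (interior (S.contrLe T x) ∩ N).Nonempty

/-- local accessibility on a set -/
def locAccOn (S : CAS d m) (M : Set (Fin d → ℝ)) : Prop :=
  ∀ x ∈ M, S.locAccAt x

/-- the domain of attraction of a set -/
def domAttr (S : CAS d m) (C : Set (Fin d → ℝ)) : Set (Fin d → ℝ) :=
  {x | (closure (S.reach x) ∩ C).Nonempty}

/-- the strict domain of attraction of an invariant control set -/
def domAttrStrict (S : CAS d m) (C : Set (Fin d → ℝ)) : Set (Fin d → ℝ) :=
  {x | (closure (S.reach x) ∩ C).Nonempty ∧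
    ∀ C', S.isInvControlSet C' → (closure (S.reach x) ∩ C').Nonempty → C' = C}

end CAS

/-! If a trajectory from `y ∈ C` enters `int C` at time `t`, then by continuous dependence on
the initial value so do the trajectories (same control, same time) from all points near `y`.
Hence the set of points whose reachable set meets `int C` is open, and it contains every `x`
with `y ∈ cl 𝒪⁺(x)`: some point of `𝒪⁺(x)` is near `y`, and concatenating controls shows that
what it reaches is reachable from `x`. Continuous dependence and concatenation both come from
the Lipschitz estimate for the integral equation via Grönwall's inequality. -/

open Real

theorem le_mul_exp_of_le_add_integral {g : ℝ → ℝ} {δ K T : ℝ} (hg : Continuous g) (hK : 0 ≤ K)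
    (h : ∀ t ∈ Icc 0 T, g t ≤ δ + ∫ s in (0 : ℝ)..t, K * g s) :
    ∀ t ∈ Icc 0 T, g t ≤ δ * exp (K * t) := by
  set W : ℝ → ℝ := fun t => δ + ∫ s in (0 : ℝ)..t, K * g s
  have hW : ∀ t, HasDerivAt W (K * g t) t := fun t =>
    ((continuous_const.mul hg).integral_hasStrictDerivAt 0 t).hasDerivAt.const_add δ
  have hW_le : ∀ t ∈ Icc 0 T, W t ≤ gronwallBound δ K 0 (t - 0) :=
    le_gronwallBound_of_liminf_deriv_right_le
      (continuous_iff_continuousAt.2 fun t => (hW t).continuousAt).continuousOn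
      (fun t _ r hr => (hW t).hasDerivWithinAt.liminf_right_slope_le hr)
      (by simp [W])
      (fun t ht => le_add_of_le_of_nonneg
        (mul_le_mul_of_nonneg_left (h t (Ico_subset_Icc_self ht)) hK) le_rfl)
  intro t ht
  simpa [gronwallBound_ε0] using (h t ht).trans (hW_le t ht)

namespace CAS

variable {d m : ℕ} (S : CAS d m)

def rhs (u : Fin m → ℝ) (x : Fin d → ℝ) : Fin d → ℝ :=
  S.f0 x + ∑ i, u i • S.f i x

def IsSolutionOn (v : ℝ → Fin m → ℝ) (α : ℝ → Fin d → ℝ) (T : ℝ) : Prop :=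
  ∀ t ∈ Icc 0 T, α t = α 0 + ∫ s in (0 : ℝ)..t, S.rhs (v s) (α s)

theorem isSolutionOn_φ {v : ℝ → Fin m → ℝ} (hv : v ∈ S.ctrl) (x : Fin d → ℝ) (T : ℝ) :
    S.IsSolutionOn v (S.φ x v) T := fun t ht => by
  rw [S.φ_init]
  exact S.φ_sol x v hv.1 hv.2 t ht.1

theorem continuous_rhs : Continuous fun p : (Fin m → ℝ) × (Fin d → ℝ) => S.rhs p.1 p.2 := by
  have hf0 : Continuous S.f0 := S.lip0.choose_spec.continuous
  have hf : ∀ i, Continuous (S.f i) := fun i => (S.lip i).choose_spec.continuous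
  unfold rhs
  fun_prop

theorem exists_lipschitzWith_rhs : ∃ L : NNReal, ∀ u ∈ S.V, LipschitzWith L (S.rhs u) := by
  obtain ⟨K₀, hK₀⟩ := S.lip0
  choose K hK using S.lip
  obtain ⟨M, hM⟩ := S.V_compact.isBounded.exists_norm_le
  refine ⟨K₀ + (∑ i, K i) * M.toNNReal, fun u hu => LipschitzWith.of_dist_le_mul fun p q => ?_⟩
  have hu_i : ∀ i, ‖u i‖ ≤ M.toNNReal := fun i =>
    ((norm_le_pi_norm u i).trans (hM u hu)).trans (Real.le_coe_toNNReal M)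
  have h_sum : ‖∑ i, (u i • S.f i p - u i • S.f i q)‖ ≤ (∑ i, K i) * M.toNNReal * dist p q := by
    push_cast
    rw [Finset.sum_mul, Finset.sum_mul]
    refine (norm_sum_le _ _).trans (Finset.sum_le_sum fun i _ => ?_)
    rw [← smul_sub, norm_smul, ← dist_eq_norm, mul_comm (K i : ℝ), mul_assoc]
    exact mul_le_mul (hu_i i) ((hK i).dist_le_mul p q) dist_nonneg (by positivity)
  rw [dist_eq_norm, dist_eq_norm]
  calc ‖S.rhs u p - S.rhs u q‖
      = ‖(S.f0 p - S.f0 q) + ∑ i, (u i • S.f i p - u i • S.f i q)‖ := by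
        simp only [rhs, Finset.sum_sub_distrib]; abel_nf
    _ ≤ K₀ * dist p q + (∑ i, K i) * M.toNNReal * dist p q :=
        (norm_add_le _ _).trans (add_le_add (dist_eq_norm (S.f0 p) _ ▸ hK₀.dist_le_mul p q) h_sum)
    _ = ↑(K₀ + (∑ i, K i) * M.toNNReal) * ‖p - q‖ := by
        rw [dist_eq_norm]; push_cast; ring

theorem intervalIntegrable_rhs {v : ℝ → Fin m → ℝ} (hv : v ∈ S.ctrl) {α : ℝ → Fin d → ℝ}
    (hα : Continuous α) (a b : ℝ) :
    IntervalIntegrable (fun s => S.rhs (v s) (α s)) MeasureTheory.volume a b := by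
  have hK : IsCompact (S.V ×ˢ (α '' uIcc a b)) := S.V_compact.prod (isCompact_uIcc.image hα)
  obtain ⟨B, hB⟩ := hK.exists_bound_of_continuousOn S.continuous_rhs.continuousOn
  rw [intervalIntegrable_iff]
  refine Measure.integrableOn_of_bounded (M := B) measure_Ioc_lt_top.ne
    (S.continuous_rhs.measurable.comp (hv.1.prodMk hα.measurable)).aestronglyMeasurable ?_
  refine (ae_restrict_iff' measurableSet_uIoc).2 (ae_of_all _ fun s hs => ?_)
  exact hB (v s, α s) ⟨hv.2 s, mem_image_of_mem α (uIoc_subset_uIcc hs)⟩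

theorem norm_sub_le_of_isSolutionOn {L : NNReal} (hL : ∀ u ∈ S.V, LipschitzWith L (S.rhs u))
    {v : ℝ → Fin m → ℝ} (hv : v ∈ S.ctrl) {α β : ℝ → Fin d → ℝ} (hα : Continuous α)
    (hβ : Continuous β) {T : ℝ} (hαT : S.IsSolutionOn v α T) (hβT : S.IsSolutionOn v β T) :
    ∀ t ∈ Icc 0 T, ‖α t - β t‖ ≤ ‖α 0 - β 0‖ * exp (L * t) := by
  refine le_mul_exp_of_le_add_integral (hα.sub hβ).norm L.2 fun t ht => ?_
  have hIα := S.intervalIntegrable_rhs hv hα 0 t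
  have hIβ := S.intervalIntegrable_rhs hv hβ 0 t
  have h_eq : α t - β t =
      (α 0 - β 0) + ∫ s in (0 : ℝ)..t, (S.rhs (v s) (α s) - S.rhs (v s) (β s)) := by
    rw [hαT t ht, hβT t ht, intervalIntegral.integral_sub hIα hIβ]
    abel
  rw [h_eq]
  refine (norm_add_le _ _).trans (add_le_add le_rfl ?_)
  refine (intervalIntegral.norm_integral_le_integral_norm ht.1).trans ?_
  refine intervalIntegral.integral_mono_on ht.1 (hIα.sub hIβ).norm
    ((continuous_const.mul (hα.sub hβ).norm).intervalIntegrable 0 t) fun s _ => ?_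
  rw [← dist_eq_norm, ← dist_eq_norm]
  exact (hL _ (hv.2 s)).dist_le_mul _ _

theorem eqOn_of_isSolutionOn {v : ℝ → Fin m → ℝ} (hv : v ∈ S.ctrl) {α β : ℝ → Fin d → ℝ}
    (hα : Continuous α) (hβ : Continuous β) {T : ℝ} (hαT : S.IsSolutionOn v α T)
    (hβT : S.IsSolutionOn v β T) (h₀ : α 0 = β 0) : EqOn α β (Icc 0 T) := fun t ht => by
  obtain ⟨L, hL⟩ := S.exists_lipschitzWith_rhs
  have := S.norm_sub_le_of_isSolutionOn hL hv hα hβ hαT hβT t ht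
  rwa [h₀, sub_self, norm_zero, zero_mul, norm_le_zero_iff, sub_eq_zero] at this

theorem continuous_φ_initial {v : ℝ → Fin m → ℝ} (hv : v ∈ S.ctrl) {t : ℝ} (ht : 0 ≤ t) :
    Continuous fun x => S.φ x v t := by
  obtain ⟨L, hL⟩ := S.exists_lipschitzWith_rhs
  refine (LipschitzWith.of_dist_le_mul (K := (exp (L * t)).toNNReal) fun x y => ?_).continuous
  have := S.norm_sub_le_of_isSolutionOn hL hv (S.φ_cont x v) (S.φ_cont y v)
    (S.isSolutionOn_φ hv x t) (S.isSolutionOn_φ hv y t) t ⟨ht, le_rfl⟩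
  rw [S.φ_init, S.φ_init] at this
  rw [dist_eq_norm, dist_eq_norm, Real.coe_toNNReal _ (exp_nonneg _), mul_comm]
  exact this

noncomputable def concat (w v : ℝ → Fin m → ℝ) (s : ℝ) : ℝ → Fin m → ℝ :=
  fun r => if r < s then w r else v (r - s)

theorem concat_mem_ctrl {w v : ℝ → Fin m → ℝ} (hw : w ∈ S.ctrl) (hv : v ∈ S.ctrl)
    (s : ℝ) : concat w v s ∈ S.ctrl := by
  refine ⟨Measurable.ite measurableSet_Iio hw.1 (hv.1.comp (measurable_id.sub_const s)),
    fun r => ?_⟩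
  unfold concat
  split_ifs
  exacts [hw.2 r, hv.2 (r - s)]

variable {S}

theorem IsSolutionOn.congr_control {v w : ℝ → Fin m → ℝ} {α : ℝ → Fin d → ℝ} {T : ℝ}
    (h : S.IsSolutionOn v α T) (hvw : EqOn v w (Ioo 0 T)) : S.IsSolutionOn w α T :=
  fun t ht => by
    rw [h t ht]
    congr 1
    refine intervalIntegral.integral_congr_Ioo_of_le ht.1 fun r hr => ?_
    rw [hvw (Ioo_subset_Ioo_right ht.2 hr)]

theorem IsSolutionOn.comp_add {u : ℝ → Fin m → ℝ} (hu : u ∈ S.ctrl) {α : ℝ → Fin d → ℝ}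
    (hα : Continuous α) {s T : ℝ} (hs : 0 ≤ s) (h : S.IsSolutionOn u α (s + T)) :
    S.IsSolutionOn (fun r => u (s + r)) (fun r => α (s + r)) T := fun t ht => by
  have hI := S.intervalIntegrable_rhs hu hα
  calc α (s + t)
      = α 0 + ((∫ σ in (0 : ℝ)..s, S.rhs (u σ) (α σ)) +
          ∫ σ in s..s + t, S.rhs (u σ) (α σ)) := by
        rw [intervalIntegral.integral_add_adjacent_intervals (hI 0 s) (hI s (s + t))]
        exact h (s + t) ⟨by linarith [ht.1], by linarith [ht.2]⟩
    _ = α (s + 0) + ∫ σ in (0 : ℝ)..t, S.rhs (u (s + σ)) (α (s + σ)) := by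
        rw [← add_assoc, ← h s ⟨hs, by linarith [ht.1, ht.2]⟩, add_zero,
          intervalIntegral.integral_comp_add_left (fun σ => S.rhs (u σ) (α σ)) s, add_zero]

variable (S)

theorem φ_concat_of_le {w v : ℝ → Fin m → ℝ} (hw : w ∈ S.ctrl) (hv : v ∈ S.ctrl)
    (x : Fin d → ℝ) (s : ℝ) : EqOn (S.φ x (concat w v s)) (S.φ x w) (Icc 0 s) :=
  S.eqOn_of_isSolutionOn hw (S.φ_cont x _) (S.φ_cont x w)
    ((S.isSolutionOn_φ (S.concat_mem_ctrl hw hv s) x s).congr_control fun _ hr => if_pos hr.2)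
    (S.isSolutionOn_φ hw x s) (by rw [S.φ_init, S.φ_init])

theorem φ_concat_add {w v : ℝ → Fin m → ℝ} (hw : w ∈ S.ctrl) (hv : v ∈ S.ctrl) (x : Fin d → ℝ)
    {s t : ℝ} (hs : 0 ≤ s) (ht : 0 ≤ t) :
    S.φ x (concat w v s) (s + t) = S.φ (S.φ x w s) v t := by
  set u := concat w v s
  have hu : u ∈ S.ctrl := S.concat_mem_ctrl hw hv s
  have h_shift : S.IsSolutionOn v (fun r => S.φ x u (s + r)) t :=
    ((S.isSolutionOn_φ hu x (s + t)).comp_add hu (S.φ_cont x u) hs).congr_control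
      fun r hr => by simp [u, concat, hr.1.le]
  refine S.eqOn_of_isSolutionOn hv ((S.φ_cont x u).comp (continuous_const_add s))
    (S.φ_cont _ v) h_shift (S.isSolutionOn_φ hv _ t) ?_ ⟨ht, le_rfl⟩
  rw [S.φ_init]
  exact (congrArg (S.φ x u) (add_zero s)).trans (S.φ_concat_of_le hw hv x s ⟨hs, le_rfl⟩)

theorem reach_subset_of_mem {x y : Fin d → ℝ} (hy : y ∈ S.reach x) : S.reach y ⊆ S.reach x := by
  obtain ⟨w, hw, s, hs, rfl⟩ := hy
  rintro _ ⟨v, hv, t, ht, rfl⟩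
  exact ⟨concat w v s, S.concat_mem_ctrl hw hv s, s + t, add_nonneg hs ht,
    S.φ_concat_add hw hv x hs ht⟩

theorem isOpen_setOf_reach_inter_nonempty {U : Set (Fin d → ℝ)} (hU : IsOpen U) :
    IsOpen {x | (S.reach x ∩ U).Nonempty} := by
  have h_eq : {x | (S.reach x ∩ U).Nonempty} =
      ⋃ v ∈ S.ctrl, ⋃ t ∈ Ici (0 : ℝ), (fun x => S.φ x v t) ⁻¹' U := by
    ext x
    simp [reach, Set.Nonempty]
  rw [h_eq]
  exact isOpen_biUnion fun v hv => isOpen_biUnion fun t ht =>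
    hU.preimage (S.continuous_φ_initial hv ht)

theorem reach_inter_nonempty_of_mem_closure {U : Set (Fin d → ℝ)} (hU : IsOpen U)
    {x y : Fin d → ℝ} (hy : y ∈ closure (S.reach x)) (hyU : (S.reach y ∩ U).Nonempty) :
    (S.reach x ∩ U).Nonempty := by
  obtain ⟨y', hy'x, z, hzy', hzU⟩ := (closure_inter_open_nonempty_iff
    (S.isOpen_setOf_reach_inter_nonempty hU)).1 ⟨y, hy, hyU⟩
  exact ⟨z, S.reach_subset_of_mem hy'x hzy', hzU⟩

end CAS

/-- For an invariant control set `C` with nonempty interior, a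
point `x` belongs to the domain of attraction `𝒜(C)` iff `𝒪⁺(x) ∩ int C ≠ ∅`;
consequently `𝒜(C)` is open. -/
theorem stmt13 {d m : ℕ} (S : CAS d m) (C : Set (Fin d → ℝ))
    (hC : S.isInvControlSet C) (hint : (interior C).Nonempty) :
    (∀ x, x ∈ S.domAttr C ↔ (S.reach x ∩ interior C).Nonempty) ∧
    IsOpen (S.domAttr C) := by
  have h_attr : ∀ x, x ∈ S.domAttr C ↔ (S.reach x ∩ interior C).Nonempty := by
    refine fun x => ⟨fun ⟨y, hyx, hyC⟩ => ?_,
      fun ⟨z, hzx, hzC⟩ => ⟨z, subset_closure hzx, interior_subset hzC⟩⟩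
    obtain ⟨p, hp⟩ := hint
    have hpy : p ∈ closure (S.reach y) := hC.2 y hyC ▸ subset_closure (interior_subset hp)
    exact S.reach_inter_nonempty_of_mem_closure isOpen_interior hyx
      ((closure_inter_open_nonempty_iff isOpen_interior).1 ⟨p, hpy, hp⟩)
  have h_eq : S.domAttr C = {x | (S.reach x ∩ interior C).Nonempty} := Set.ext h_attr
  exact ⟨h_attr, h_eq ▸ S.isOpen_setOf_reach_inter_nonempty isOpen_interior⟩
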